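/- arXiv:1507.02193 — 4 statements merged into one kernel-verified Lean document; each statement's English description precedes it below -/
import Mathlib

section
/- For real p > 0, M > 0, μ > 0 and nonnegative integer k, the integral ∫₀^p e^{-Mτ²} τ^{2k+1} (p² - τ²)^{μ-1} dτ equals (p^{2k+2μ} · k! · Γ(μ) / (2 Γ(k+μ+1))) · ₁F₁(k+1; k+μ+1; -Mp²), where ₁F₁ is the confluent hypergeometric function. -/
/-!
Substituting `u = τ²` turns the integral into `½ ∫₀^{p²} e^{-Mu} u^k (p² - u)^{μ-1} du`.
Expanding `e^{-Mu}` in its power series and integrating term by term (the terms are dominated by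
`(|M| p²)^r / r! · u^k (p² - u)^{μ-1}`), each term is a beta integral
`∫₀^q u^{k+r} (q - u)^{μ-1} du = q^{k+r+μ} Γ(k+r+1) Γ(μ) / Γ(k+r+μ+1)` with `q = p²`,
and the resulting series is the one defining `₁F₁(k+1; k+μ+1; -Mp²)`.
-/

open MeasureTheory Real

/-- The confluent hypergeometric function `₁F₁(a; b; z) = ∑_{r≥0} (a)_r z^r / ((b)_r r!)`,
where `(a)_r = Γ(a+r)/Γ(a)` is the Pochhammer symbol. -/
noncomputable def oneFOne (a b z : ℝ) : ℝ :=
  ∑' r : ℕ, (Real.Gamma (a + r) / Real.Gamma a) * z ^ r /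
    ((Real.Gamma (b + r) / Real.Gamma b) * r.factorial)

open Set Nat

theorem intervalIntegral.integral_comp_sq_mul_self {p : ℝ} (hp : 0 ≤ p) (g : ℝ → ℝ) :
    ∫ τ in 0..p, g (τ ^ 2) * τ = (∫ u in 0..p ^ 2, g u) / 2 := by
  have hmono : StrictMonoOn (fun τ : ℝ => τ ^ 2) (Icc 0 p) :=
    (pow_left_strictMonoOn₀ two_ne_zero).mono fun τ hτ => hτ.1
  have himage : (fun τ : ℝ => τ ^ 2) '' Ioc 0 p = Ioc 0 (p ^ 2) := by
    simpa using (continuous_pow 2).continuousOn.image_Ioc_of_strictMonoOn hp hmono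
  have hcov := integral_image_eq_integral_abs_deriv_smul measurableSet_Ioc
    (fun τ _ => (hasDerivAt_pow 2 τ).hasDerivWithinAt) (hmono.injOn.mono Ioc_subset_Icc_self) g
  rw [himage] at hcov
  rw [intervalIntegral.integral_of_le hp, intervalIntegral.integral_of_le (by positivity), hcov,
    eq_div_iff two_ne_zero, ← MeasureTheory.integral_mul_const]
  refine setIntegral_congr_fun measurableSet_Ioc fun τ hτ => ?_
  simp only [cast_ofNat, Nat.add_one_sub_one, pow_one, abs_mul, abs_ofNat, abs_of_pos hτ.1,
    smul_eq_mul]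
  ring

theorem intervalIntegrable_sub_rpow (q : ℝ) {b : ℝ} (hb : 0 < b) :
    IntervalIntegrable (fun u => (q - u) ^ (b - 1)) volume 0 q := by
  simpa using ((intervalIntegral.intervalIntegrable_rpow' (a := 0) (b := q)
    (by linarith : -1 < b - 1)).comp_sub_left q).symm

theorem integral_rpow_mul_sub_rpow {q a b : ℝ} (hq : 0 < q) (ha : 0 < a) (hb : 0 < b) :
    ∫ u in 0..q, u ^ (a - 1) * (q - u) ^ (b - 1) =
      q ^ (a + b - 1) * (Gamma a * Gamma b / Gamma (a + b)) := by
  apply Complex.ofReal_injective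
  have hbeta := Complex.betaIntegral_scaled a b hq
  rw [Complex.betaIntegral_eq_Gamma_mul_div _ _ (by simpa) (by simpa)] at hbeta
  push_cast [← Complex.Gamma_ofReal, Complex.ofReal_cpow hq.le]
  rw [← hbeta, ← intervalIntegral.integral_ofReal]
  refine intervalIntegral.integral_congr fun u hu => ?_
  rw [uIcc_of_le hq.le] at hu
  push_cast [Complex.ofReal_cpow hu.1, Complex.ofReal_cpow (sub_nonneg.2 hu.2)]
  rfl

theorem hasSum_intervalIntegral_exp_mul {a b : ℝ} {w : ℝ → ℝ}
    (hw : IntervalIntegrable w volume a b) (c : ℝ) :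
    HasSum (fun r : ℕ => c ^ r / r ! * ∫ u in a..b, u ^ r * w u)
      (∫ u in a..b, exp (c * u) * w u) := by
  set R := |c| * max |a| |b|
  have hexp (x : ℝ) : HasSum (fun n : ℕ => x ^ n / n !) (exp x) :=
    exp_eq_exp_ℝ ▸ NormedSpace.expSeries_div_hasSum_exp x
  have habs {u : ℝ} (hu : u ∈ uIoc a b) : |u| ≤ max |a| |b| :=
    abs_le.2 ⟨le_min (by linarith [neg_abs_le a, le_max_left |a| |b|])
        (by linarith [neg_abs_le b, le_max_right |a| |b|]) |>.trans hu.1.le,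
      hu.2.trans (max_le_max (le_abs_self a) (le_abs_self b))⟩
  have hF := intervalIntegral.hasSum_integral_of_dominated_convergence
    (F := fun r u => c ^ r / r ! * (u ^ r * w u)) (f := fun u => exp (c * u) * w u)
    (fun r u => R ^ r / r ! * ‖w u‖) (fun r =>
      ((continuous_pow r).aestronglyMeasurable.mul hw.def'.aestronglyMeasurable).const_mul _)
    (fun r => ae_of_all _ fun u hu => ?_) (ae_of_all _ fun u _ => (hexp R).summable.mul_right _)
    ?_ (ae_of_all _ fun u _ => ?_)
  · simpa only [intervalIntegral.integral_const_mul] using hF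
  · simp only [norm_mul, norm_div, norm_pow, Real.norm_eq_abs, Nat.abs_cast, R, mul_pow]
    rw [← mul_assoc, mul_div_right_comm]
    gcongr
    exact habs hu
  · simp_rw [fun u => ((hexp R).mul_right ‖w u‖).tsum_eq]
    exact hw.norm.const_mul _
  · simpa [mul_pow, mul_div_right_comm, mul_assoc] using (hexp (c * u)).mul_right (w u)

theorem integral_exp_mul_pow_mul_sub_rpow {q μ : ℝ} (hq : 0 < q) (hμ : 0 < μ) (c : ℝ) (k : ℕ) :
    ∫ u in 0..q, exp (c * u) * (u ^ k * (q - u) ^ (μ - 1)) =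
      q ^ ((k : ℝ) + μ) * k ! * Gamma μ / Gamma (k + μ + 1) *
        oneFOne (k + 1) (k + μ + 1) (c * q) := by
  have hmoment (r : ℕ) : ∫ u in 0..q, u ^ r * (u ^ k * (q - u) ^ (μ - 1)) =
      q ^ ((k : ℝ) + 1 + r + μ - 1) * (Gamma (k + 1 + r) * Gamma μ / Gamma (k + 1 + r + μ)) := by
    rw [← integral_rpow_mul_sub_rpow hq (by positivity) hμ]
    refine intervalIntegral.integral_congr fun u _ => ?_
    rw [← mul_assoc, ← pow_add, ← rpow_natCast]
    congr 2
    push_cast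
    ring
  have hw : IntervalIntegrable (fun u => u ^ k * (q - u) ^ (μ - 1)) volume 0 q :=
    (intervalIntegrable_sub_rpow q hμ).continuousOn_mul (continuous_pow k).continuousOn
  rw [← (hasSum_intervalIntegral_exp_mul hw c).tsum_eq, oneFOne, ← tsum_mul_left]
  refine tsum_congr fun r => ?_
  have hpow : q ^ ((k : ℝ) + 1 + r + μ - 1) = q ^ ((k : ℝ) + μ) * q ^ r := by
    rw [← rpow_natCast q r, ← rpow_add hq]
    congr 1
    ring
  have hΓ₁ : Gamma ((k : ℝ) + μ + 1) ≠ 0 := (Gamma_pos_of_pos (by positivity)).ne'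
  have hΓ₂ : Gamma ((k : ℝ) + μ + 1 + r) ≠ 0 := (Gamma_pos_of_pos (by positivity)).ne'
  rw [hmoment r, hpow, Gamma_nat_eq_factorial, show (k : ℝ) + 1 + r + μ = k + μ + 1 + r by ring,
    mul_pow]
  field_simp

theorem integral_exp_mul_pow_rpow_eq_general (p M μ : ℝ) (hp : 0 < p) (hμ : 0 < μ)
    (k : ℕ) :
    ∫ τ in (0 : ℝ)..p, Real.exp (-M * τ ^ 2) * τ ^ (2 * k + 1) * (p ^ 2 - τ ^ 2) ^ (μ - 1) =
      p ^ (2 * (k : ℝ) + 2 * μ) * k.factorial * Real.Gamma μ /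
        (2 * Real.Gamma ((k : ℝ) + μ + 1)) *
        oneFOne ((k : ℝ) + 1) ((k : ℝ) + μ + 1) (-M * p ^ 2) := by
  calc ∫ τ in (0 : ℝ)..p, exp (-M * τ ^ 2) * τ ^ (2 * k + 1) * (p ^ 2 - τ ^ 2) ^ (μ - 1)
      = ∫ τ in (0 : ℝ)..p,
          exp (-M * τ ^ 2) * ((τ ^ 2) ^ k * (p ^ 2 - τ ^ 2) ^ (μ - 1)) * τ :=
        intervalIntegral.integral_congr fun τ _ => by ring
    _ = (∫ u in (0 : ℝ)..p ^ 2, exp (-M * u) * (u ^ k * (p ^ 2 - u) ^ (μ - 1))) / 2 :=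
        intervalIntegral.integral_comp_sq_mul_self hp.le
          (fun u => exp (-M * u) * (u ^ k * (p ^ 2 - u) ^ (μ - 1)))
    _ = _ := by
        rw [integral_exp_mul_pow_mul_sub_rpow (by positivity) hμ, ← rpow_natCast_mul hp.le]
        push_cast
        rw [mul_add]
        ring

theorem integral_exp_mul_pow_rpow_eq (p M μ : ℝ) (hp : 0 < p) (hM : 0 < M) (hμ : 0 < μ)
    (k : ℕ) :
    ∫ τ in (0 : ℝ)..p, Real.exp (-M * τ ^ 2) * τ ^ (2 * k + 1) * (p ^ 2 - τ ^ 2) ^ (μ - 1) =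
      p ^ (2 * (k : ℝ) + 2 * μ) * k.factorial * Real.Gamma μ /
        (2 * Real.Gamma ((k : ℝ) + μ + 1)) *
        oneFOne ((k : ℝ) + 1) ((k : ℝ) + μ + 1) (-M * p ^ 2) :=
  integral_exp_mul_pow_rpow_eq_general p M μ hp hμ k
end

section
/- For a ≥ 0 and χ ≥ 1 with a ≤ χ, the upper incomplete gamma function satisfies Γ(a, χ) ≤ 2 e^{-χ} χ^a. -/
/-! For `t ≥ χ` write `t ^ (a - 1) ≤ χ ^ (a - 1) (t / χ) ^ q ≤ χ ^ (a - 1) e ^ {q (t / χ - 1)}` with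
`q = max (a - 1) 0`, using `log x ≤ x - 1`. This dominates the integrand by an exponential
`χ ^ (a - 1) e ^ {-q} e ^ {-(1 - q / χ) t}`, whose integral over `(χ, ∞)` is `e ^ {-χ} χ ^ a / (χ - q)`.
When `a ≤ χ` and `1 ≤ χ` we have `χ - q ≥ 1`, so the bound holds even with constant 1. -/

open MeasureTheory Real

/-- The upper incomplete gamma function `Γ(a, χ) = ∫_χ^∞ e^{-t} t^{a-1} dt`. -/
noncomputable def upperGamma (a χ : ℝ) : ℝ :=
  ∫ t in Set.Ioi χ, Real.exp (-t) * t ^ (a - 1)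

lemma rpow_le_rpow_mul_exp_max {x t : ℝ} (hx : 0 < x) (hxt : x ≤ t) (p : ℝ) :
    t ^ p ≤ x ^ p * exp (max p 0 * (t / x - 1)) := by
  have hy : 1 ≤ t / x := (one_le_div hx).mpr hxt
  have hlog : max p 0 * log (t / x) ≤ max p 0 * (t / x - 1) :=
    mul_le_mul_of_nonneg_left (log_le_sub_one_of_pos (by linarith)) (le_max_right _ _)
  calc t ^ p = x ^ p * (t / x) ^ p := by
        rw [div_rpow (hx.le.trans hxt) hx.le, mul_div_cancel₀ _ (rpow_pos_of_pos hx p).ne']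
    _ ≤ x ^ p * (t / x) ^ max p 0 := by
        gcongr
        exact le_max_left _ _
    _ ≤ x ^ p * exp (max p 0 * (t / x - 1)) := by
        rw [rpow_def_of_pos (x := t / x) (by linarith), mul_comm (log _)]
        exact mul_le_mul_of_nonneg_left (exp_le_exp.mpr hlog) (rpow_nonneg hx.le p)

theorem upperGamma_le_exp_neg_mul_rpow_div {a χ : ℝ} (h : max (a - 1) 0 < χ) :
    upperGamma a χ ≤ exp (-χ) * χ ^ a / (χ - max (a - 1) 0) := by
  set q := max (a - 1) 0
  have hχ : 0 < χ := (le_max_right _ _).trans_lt h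
  set b := 1 - q / χ
  have hb : 0 < b := by
    simp only [b, sub_pos]
    exact (div_lt_one hχ).mpr h
  calc upperGamma a χ ≤ ∫ t in Set.Ioi χ, χ ^ (a - 1) * exp (-q) * exp (-b * t) := by
        refine integral_mono_of_nonneg ?_ ((exp_neg_integrableOn_Ioi χ hb).const_mul _) ?_
        · filter_upwards [ae_restrict_mem measurableSet_Ioi] with t ht
          exact mul_nonneg (exp_pos _).le (rpow_nonneg (hχ.trans ht).le _)
        · filter_upwards [ae_restrict_mem measurableSet_Ioi] with t ht
          calc exp (-t) * t ^ (a - 1) ≤ exp (-t) * (χ ^ (a - 1) * exp (q * (t / χ - 1))) :=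
                mul_le_mul_of_nonneg_left (rpow_le_rpow_mul_exp_max hχ (le_of_lt ht) _)
                  (exp_pos _).le
            _ = χ ^ (a - 1) * exp (-q) * exp (-b * t) := by
                rw [mul_left_comm, mul_assoc, ← exp_add, ← exp_add]
                congr 2
                simp only [b]
                ring
    _ = χ ^ (a - 1) * exp (-q) * (-exp (-b * χ) / -b) := by
        rw [integral_const_mul, integral_exp_mul_Ioi (neg_neg_of_pos hb)]
    _ = exp (-χ) * χ ^ a / (χ - q) := by
        have hexp : exp (-q) * exp (-b * χ) = exp (-χ) := by
          rw [← exp_add]; congr 1; simp only [b]; field_simp; ring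
        rw [neg_div_neg_eq, rpow_sub_one hχ.ne', mul_assoc, mul_div_assoc', hexp]
        simp only [b]
        field_simp

theorem upperGamma_le_general (a χ : ℝ) (hχ : 1 ≤ χ) (haχ : a ≤ χ) :
    upperGamma a χ ≤ 2 * Real.exp (-χ) * χ ^ a := by
  have hq : 1 ≤ χ - max (a - 1) 0 := by
    rw [le_sub_iff_add_le, ← le_sub_iff_add_le', max_le_iff]
    constructor <;> linarith
  have hpos : 0 ≤ exp (-χ) * χ ^ a := by positivity
  calc upperGamma a χ ≤ exp (-χ) * χ ^ a / (χ - max (a - 1) 0) :=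
        upperGamma_le_exp_neg_mul_rpow_div (by linarith)
    _ ≤ exp (-χ) * χ ^ a := div_le_self hpos hq
    _ ≤ 2 * exp (-χ) * χ ^ a := by linarith

theorem upperGamma_le (a χ : ℝ) (ha : 0 ≤ a) (hχ : 1 ≤ χ) (haχ : a ≤ χ) :
    upperGamma a χ ≤ 2 * Real.exp (-χ) * χ ^ a :=
  upperGamma_le_general a χ hχ haχ
end

section
/- Let M > 0, c > 0, u₀ with 0 < u₀ ≤ c, and let n be a positive integer with n < M u₀ c. Then the tail T = ∑_{k=0}^{n-1} ((Mc²)^{-k} / (4^k k!)) Γ(2k, 2M u₀ c) satisfies T < 2 e^{-M u₀ c}, where Γ(a,χ) is the upper incomplete gamma function (with Γ(0,χ) interpreted as the exponential integral term, or the k=0 term bounded directly). -/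
open MeasureTheory Real Finset

/-! Bounding `(t/χ)^(a-1) ≤ (t/χ)^p ≤ e^{p (t/χ - 1)}` with `p = max (a-1) 0` dominates the
integrand of `Γ(a, χ)` on `(χ, ∞)` by an exponential of rate `1 - p/χ ≥ 1/χ` (this is where `a ≤ χ`
enters), whence `Γ(a, χ) ≤ χ^a e^{-χ}` for `χ ≥ 1`. With `χ = 2Mu₀c` the tail becomes a truncated
exponential series: `T ≤ e^{-2Mu₀c} ∑_{k<n} (Mu₀²)^k/k! ≤ e^{Mu₀² - 2Mu₀c} ≤ e^{-Mu₀c}` as `u₀ ≤ c`. -/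

lemma rpow_le_rpow_mul_exp_of_le {a p χ t : ℝ} (hχ : 0 < χ) (ht : χ ≤ t) (hp : 0 ≤ p)
    (hap : a ≤ p) : t ^ a ≤ χ ^ a * exp (p * (t / χ - 1)) := by
  have hq : 1 ≤ t / χ := (one_le_div hχ).2 ht
  have hsplit : t ^ a = χ ^ a * (t / χ) ^ a := by
    rw [← mul_rpow hχ.le (by positivity), mul_div_cancel₀ _ hχ.ne']
  rw [hsplit]
  gcongr
  calc (t / χ) ^ a ≤ (t / χ) ^ p := rpow_le_rpow_of_exponent_le hq hap
    _ = exp (p * log (t / χ)) := by rw [rpow_def_of_pos (by positivity), mul_comm]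
    _ ≤ exp (p * (t / χ - 1)) := by
      gcongr
      exact log_le_sub_one_of_pos (by positivity)

lemma upperGamma_le_rpow_mul_exp {a χ : ℝ} (hχ : 1 ≤ χ) (haχ : a ≤ χ) :
    upperGamma a χ ≤ χ ^ a * exp (-χ) := by
  have hχ0 : 0 < χ := one_pos.trans_le hχ
  set p := max (a - 1) 0
  set b := 1 - p / χ
  have hpχ : p ≤ χ - 1 := max_le (by linarith) (by linarith)
  have hbχ : χ⁻¹ ≤ b := by
    rw [inv_eq_one_div, le_sub_iff_add_le, ← add_div, div_le_one hχ0]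
    linarith
  have hb : 0 < b := (inv_pos.2 hχ0).trans_le hbχ
  have hbound : ∀ t ∈ Set.Ioi χ,
      exp (-t) * t ^ (a - 1) ≤ χ ^ (a - 1) * exp (-p) * exp (-b * t) := fun t ht => by
    calc exp (-t) * t ^ (a - 1) ≤ exp (-t) * (χ ^ (a - 1) * exp (p * (t / χ - 1))) := by
          gcongr
          exact rpow_le_rpow_mul_exp_of_le hχ0 ht.le (le_max_right _ _)
            (le_max_left _ _)
      _ = χ ^ (a - 1) * exp (-p) * exp (-b * t) := by
          rw [mul_left_comm, mul_assoc, ← exp_add, ← exp_add]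
          congr 2
          simp only [b]
          field_simp
          ring
  have hintegral : ∫ t in Set.Ioi χ, χ ^ (a - 1) * exp (-p) * exp (-b * t)
      = χ ^ (a - 1) * exp (-χ) / b := by
    rw [integral_const_mul, integral_exp_mul_Ioi (neg_lt_zero.2 hb), neg_div_neg_eq,
      mul_div_assoc', mul_assoc, ← exp_add]
    congr 3
    simp only [b]
    field_simp
    ring
  calc upperGamma a χ ≤ χ ^ (a - 1) * exp (-χ) / b := by
        rw [upperGamma, ← hintegral]
        refine setIntegral_mono_of_nonneg (fun t ht => ?_) hbound
          ((exp_neg_integrableOn_Ioi χ hb).const_mul _)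
        have : 0 < t := hχ0.trans ht
        positivity
    _ ≤ χ ^ (a - 1) * exp (-χ) * χ := by
        rw [div_eq_mul_inv]
        gcongr
        exact (inv_le_comm₀ hχ0 hb).1 hbχ
    _ = χ ^ a * exp (-χ) := by
        rw [mul_right_comm, ← rpow_add_one hχ0.ne', sub_add_cancel]

theorem tail_bound_general (M c u₀ : ℝ) (hM : 0 < M) (hc : 0 < c) (hu₀ : 0 < u₀) (hu₀c : u₀ ≤ c)
    (n : ℕ) (hnM : (n : ℝ) < M * u₀ * c) :
    ∑ k ∈ Finset.range n,
        (M * c ^ 2) ^ (-(k : ℝ)) / (4 ^ k * k.factorial) * upperGamma (2 * k) (2 * M * u₀ * c) <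
      2 * Real.exp (-(M * u₀ * c)) := by
  set χ := 2 * M * u₀ * c
  set x := M * u₀ ^ 2
  have hterm : ∀ k ∈ Finset.range n,
      (M * c ^ 2) ^ (-(k : ℝ)) / (4 ^ k * k.factorial) * upperGamma (2 * k) χ
        ≤ x ^ k / k.factorial * exp (-χ) := by
    intro k hk
    have hkn : (k : ℝ) + 1 ≤ n := by exact_mod_cast Finset.mem_range.1 hk
    have hkχ : 2 * (k : ℝ) + 2 ≤ χ := by linarith
    calc (M * c ^ 2) ^ (-(k : ℝ)) / (4 ^ k * k.factorial) * upperGamma (2 * k) χ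
        ≤ (M * c ^ 2) ^ (-(k : ℝ)) / (4 ^ k * k.factorial) * (χ ^ (2 * (k : ℝ)) * exp (-χ)) := by
          gcongr
          exact upperGamma_le_rpow_mul_exp (by linarith) (by linarith)
      _ = x ^ k / k.factorial * exp (-χ) := by
          rw [rpow_neg (by positivity), rpow_natCast,
            show 2 * (k : ℝ) = (2 * k : ℕ) by push_cast; ring, rpow_natCast, pow_mul]
          simp only [χ, x]
          field_simp
          ring
  calc ∑ k ∈ Finset.range n,
        (M * c ^ 2) ^ (-(k : ℝ)) / (4 ^ k * k.factorial) * upperGamma (2 * k) χ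
      ≤ (∑ k ∈ Finset.range n, x ^ k / k.factorial) * exp (-χ) := by
        rw [Finset.sum_mul]
        exact Finset.sum_le_sum hterm
    _ ≤ exp x * exp (-χ) := by
        gcongr
        exact sum_le_exp_of_nonneg (by positivity) n
    _ ≤ exp (-(M * u₀ * c)) := by
        rw [← exp_add]
        gcongr
        nlinarith [mul_pos hM hu₀]
    _ < 2 * exp (-(M * u₀ * c)) := by linarith [exp_pos (-(M * u₀ * c))]

theorem tail_bound (M c u₀ : ℝ) (hM : 0 < M) (hc : 0 < c) (hu₀ : 0 < u₀) (hu₀c : u₀ ≤ c)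
    (n : ℕ) (hn : 1 ≤ n) (hnM : (n : ℝ) < M * u₀ * c) :
    ∑ k ∈ Finset.range n,
        (M * c ^ 2) ^ (-(k : ℝ)) / (4 ^ k * k.factorial) * upperGamma (2 * k) (2 * M * u₀ * c) <
      2 * Real.exp (-(M * u₀ * c)) :=
  tail_bound_general M c u₀ hM hc hu₀ hu₀c n hnM
end

section
/- Let I₁ = ∫₀^p e^{-Mτ²} sin(2Mτ) (p² − τ²)^{-1/2} dτ with p > 0, M > 0, x = 2Mp, ρ = Mp². Then I₁ = (√π/2) ∑_{k=0}^∞ ((−1)^k x^{2k+1} / (2k+1)!) · (k!/Γ(k+3/2)) · ₁F₁(k+1; k+3/2; −ρ). -/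
open MeasureTheory Real

/-!
Expand `exp (-M τ²) sin (2Mτ)` as the double power series `∑ a_k b_r τ^(2(k+r)+1)` (sine in `k`,
exponential in `r`). Against the kernel `(p² - τ²)^(-1/2)` on `(0, p]` each monomial gives an odd
moment `m_n = ∫₀^p τ^(2n+1) / √(p² - τ²) dτ`; differentiating `τ^(2n+2) √(p² - τ²)` yields
`(2n+3) m_(n+1) = (2n+2) p² m_n`, whence `m_n = p^(2n+1) n! √π / (2 Γ(n + 3/2))`. The crude bound
`m_n ≤ p^(2n+1)` dominates the double series of absolute values by `sinh (2|M|p) · exp (|M|p²)`, so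
it may be integrated termwise, and summing over `r` first assembles `₁F₁(k+1; k+3/2; -Mp²)`.
-/

open Set
open scoped Nat

noncomputable def oddMoment (p : ℝ) (n : ℕ) : ℝ :=
  ∫ τ in Ioc 0 p, τ ^ (2 * n + 1) / √(p ^ 2 - τ ^ 2)

section OddMoment

variable {p : ℝ}

lemma hasDerivAt_neg_sqrt_sq_sub {τ : ℝ} (h : τ ^ 2 < p ^ 2) :
    HasDerivAt (fun t => -√(p ^ 2 - t ^ 2)) (τ / √(p ^ 2 - τ ^ 2)) τ := by
  refine (((hasDerivAt_pow 2 τ).const_sub (p ^ 2)).sqrt (sub_pos.mpr h).ne').fun_neg.congr_deriv ?_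
  norm_num
  field_simp

lemma hasDerivAt_pow_mul_neg_sqrt_sq_sub (n : ℕ) {τ : ℝ} (h : τ ^ 2 < p ^ 2) :
    HasDerivAt (fun t => t ^ (2 * n + 2) * -√(p ^ 2 - t ^ 2))
      ((2 * n + 3) * (τ ^ (2 * (n + 1) + 1) / √(p ^ 2 - τ ^ 2)) -
        (2 * n + 2) * p ^ 2 * (τ ^ (2 * n + 1) / √(p ^ 2 - τ ^ 2))) τ := by
  have hs : 0 < p ^ 2 - τ ^ 2 := sub_pos.mpr h
  refine ((hasDerivAt_pow (2 * n + 2) τ).mul (hasDerivAt_neg_sqrt_sq_sub h)).congr_deriv ?_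
  have hsq := sq_sqrt hs.le
  have := (sqrt_pos.mpr hs).ne'
  rw [show 2 * n + 2 - 1 = 2 * n + 1 by omega]
  field_simp
  push_cast
  linear_combination -(2 * (n : ℝ) + 2) * τ ^ (2 * n + 1) * hsq

lemma sq_lt_sq_of_mem_Ioo {τ : ℝ} (hτ : τ ∈ Ioo 0 p) : τ ^ 2 < p ^ 2 :=
  pow_lt_pow_left₀ hτ.2 hτ.1.le two_ne_zero

lemma integrableOn_div_sqrt_sq_sub (p : ℝ) :
    IntegrableOn (fun τ => τ / √(p ^ 2 - τ ^ 2)) (Ioc 0 p) :=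
  intervalIntegral.integrableOn_deriv_of_nonneg (by fun_prop)
    (fun _ hτ => hasDerivAt_neg_sqrt_sq_sub (sq_lt_sq_of_mem_Ioo hτ))
    (fun _ hτ => div_nonneg hτ.1.le (sqrt_nonneg _))

lemma integral_div_sqrt_sq_sub (hp : 0 ≤ p) :
    ∫ τ in Ioc 0 p, τ / √(p ^ 2 - τ ^ 2) = p := by
  rw [← intervalIntegral.integral_of_le hp,
    intervalIntegral.integral_eq_sub_of_hasDerivAt_of_le hp (by fun_prop)
      (fun _ hτ => hasDerivAt_neg_sqrt_sq_sub (sq_lt_sq_of_mem_Ioo hτ))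
      ((intervalIntegrable_iff_integrableOn_Ioc_of_le hp).mpr (integrableOn_div_sqrt_sq_sub p))]
  simp [sqrt_sq hp]

lemma pow_div_sqrt_le {τ : ℝ} (hτ : τ ∈ Ioc 0 p) (n : ℕ) :
    τ ^ (2 * n + 1) / √(p ^ 2 - τ ^ 2) ≤ p ^ (2 * n) * (τ / √(p ^ 2 - τ ^ 2)) := by
  rw [mul_div_assoc', pow_succ]
  have := hτ.1.le
  gcongr
  exact hτ.2

lemma integrableOn_pow_div_sqrt_sq_sub (p : ℝ) (n : ℕ) :
    IntegrableOn (fun τ => τ ^ (2 * n + 1) / √(p ^ 2 - τ ^ 2)) (Ioc 0 p) := by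
  refine ((integrableOn_div_sqrt_sq_sub p).const_mul (p ^ (2 * n))).mono'
    (by fun_prop : Measurable _).aestronglyMeasurable ?_
  filter_upwards [ae_restrict_mem measurableSet_Ioc] with τ hτ
  rw [norm_of_nonneg (div_nonneg (pow_nonneg hτ.1.le _) (sqrt_nonneg _))]
  exact pow_div_sqrt_le hτ n

lemma oddMoment_le (hp : 0 ≤ p) (n : ℕ) : oddMoment p n ≤ p ^ (2 * n + 1) :=
  calc oddMoment p n ≤ ∫ τ in Ioc 0 p, p ^ (2 * n) * (τ / √(p ^ 2 - τ ^ 2)) :=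
        setIntegral_mono_on (integrableOn_pow_div_sqrt_sq_sub p n)
          ((integrableOn_div_sqrt_sq_sub p).const_mul _) measurableSet_Ioc
          fun _ hτ => pow_div_sqrt_le hτ n
    _ = p ^ (2 * n + 1) := by rw [integral_const_mul, integral_div_sqrt_sq_sub hp, pow_succ]

lemma oddMoment_succ (hp : 0 ≤ p) (n : ℕ) :
    (2 * n + 3) * oddMoment p (n + 1) = (2 * n + 2) * p ^ 2 * oddMoment p n := by
  have hint₁ := (integrableOn_pow_div_sqrt_sq_sub p (n + 1)).const_mul (2 * (n : ℝ) + 3)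
  have hint₀ := (integrableOn_pow_div_sqrt_sq_sub p n).const_mul ((2 * (n : ℝ) + 2) * p ^ 2)
  have hFTC := intervalIntegral.integral_eq_sub_of_hasDerivAt_of_le hp (by fun_prop)
    (fun _ hτ => hasDerivAt_pow_mul_neg_sqrt_sq_sub n (sq_lt_sq_of_mem_Ioo hτ))
    ((intervalIntegrable_iff_integrableOn_Ioc_of_le hp).mpr (hint₁.sub hint₀))
  rw [intervalIntegral.integral_of_le hp, integral_sub hint₁ hint₀, integral_const_mul,
    integral_const_mul] at hFTC
  simp only [sub_self, sqrt_zero, neg_zero, mul_zero, zero_pow (by omega : 2 * n + 2 ≠ 0),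
    zero_mul] at hFTC
  rw [oddMoment, oddMoment]
  linarith

lemma oddMoment_eq (hp : 0 ≤ p) (n : ℕ) :
    oddMoment p n = p ^ (2 * n + 1) * n ! * √π / (2 * Gamma (n + 3 / 2)) := by
  induction n with
  | zero =>
    have hΓ : Gamma (3 / 2) = √π / 2 := by
      rw [show (3 / 2 : ℝ) = 1 / 2 + 1 by norm_num, Gamma_add_one (by norm_num), Gamma_one_half_eq]
      ring
    have := (sqrt_pos.mpr pi_pos).ne'
    simp only [oddMoment, mul_zero, zero_add, pow_one, integral_div_sqrt_sq_sub hp,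
      Nat.factorial_zero, Nat.cast_zero, Nat.cast_one, hΓ]
    field_simp
  | succ n ih =>
    have hΓ : Gamma ((n + 1 : ℕ) + 3 / 2) = (n + 3 / 2) * Gamma (n + 3 / 2) := by
      rw [← Gamma_add_one (by positivity)]
      push_cast
      ring_nf
    have := (Gamma_pos_of_pos (by positivity : (0 : ℝ) < n + 3 / 2)).ne'
    have hrec := oddMoment_succ hp n
    rw [ih] at hrec
    rw [hΓ, Nat.factorial_succ]
    field_simp at hrec ⊢
    push_cast
    linear_combination hrec

end OddMoment

lemma hasSum_integral_oddMoment {ι : Type*} [Countable ι] {p : ℝ} (hp : 0 ≤ p) (w : ι → ℝ)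
    (m : ι → ℕ) (hw : Summable fun i => |w i| * p ^ (2 * m i + 1)) :
    HasSum (fun i => w i * oddMoment p (m i))
      (∫ τ in Ioc 0 p, ∑' i, w i * (τ ^ (2 * m i + 1) / √(p ^ 2 - τ ^ 2))) := by
  have hnorm (i : ι) :
      ∫ τ in Ioc 0 p, ‖w i * (τ ^ (2 * m i + 1) / √(p ^ 2 - τ ^ 2))‖ =
        |w i| * oddMoment p (m i) := by
    rw [oddMoment, ← integral_const_mul]
    refine setIntegral_congr_fun measurableSet_Ioc fun τ hτ => ?_
    rw [norm_mul, norm_of_nonneg (div_nonneg (pow_nonneg hτ.1.le _) (sqrt_nonneg _)),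
      Real.norm_eq_abs]
  have hsum : Summable fun i =>
      ∫ τ in Ioc 0 p, ‖w i * (τ ^ (2 * m i + 1) / √(p ^ 2 - τ ^ 2))‖ := by
    refine hw.of_nonneg_of_le (fun i => integral_nonneg fun _ => norm_nonneg _) fun i => ?_
    rw [hnorm]
    exact mul_le_mul_of_nonneg_left (oddMoment_le hp _) (abs_nonneg _)
  simpa only [oddMoment, integral_const_mul] using hasSum_integral_of_summable_integral_norm
    (fun i => (integrableOn_pow_div_sqrt_sq_sub p (m i)).const_mul (w i)) hsum

noncomputable def sinCoeff (c : ℝ) (k : ℕ) : ℝ := (-1) ^ k * c ^ (2 * k + 1) / (2 * k + 1)!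

noncomputable def expCoeff (M : ℝ) (r : ℕ) : ℝ := (-M) ^ r / r !

lemma sinCoeff_mul_pow (c τ : ℝ) (k : ℕ) :
    sinCoeff c k * τ ^ (2 * k + 1) = (-1) ^ k * (c * τ) ^ (2 * k + 1) / (2 * k + 1)! := by
  rw [sinCoeff, mul_pow]
  ring

lemma expCoeff_mul_pow (M τ : ℝ) (r : ℕ) :
    expCoeff M r * τ ^ (2 * r) = (-M * τ ^ 2) ^ r / r ! := by
  rw [expCoeff, mul_pow, ← pow_mul]
  ring

lemma hasSum_sinCoeff_mul_pow (c τ : ℝ) :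
    HasSum (fun k => sinCoeff c k * τ ^ (2 * k + 1)) (sin (c * τ)) := by
  simpa only [sinCoeff_mul_pow] using hasSum_sin (c * τ)

lemma hasSum_expCoeff_mul_pow (M τ : ℝ) :
    HasSum (fun r => expCoeff M r * τ ^ (2 * r)) (exp (-M * τ ^ 2)) := by
  simpa only [expCoeff_mul_pow, exp_eq_exp_ℝ] using
    NormedSpace.expSeries_div_hasSum_exp (-M * τ ^ 2)

lemma summable_norm_sinCoeff_mul_pow (c τ : ℝ) :
    Summable fun k => ‖sinCoeff c k * τ ^ (2 * k + 1)‖ := by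
  simp only [sinCoeff_mul_pow, norm_div, norm_mul, norm_pow, norm_neg, norm_one, one_pow, one_mul,
    RCLike.norm_natCast]
  exact (summable_pow_div_factorial (‖c‖ * ‖τ‖)).comp_injective
    (i := fun k => 2 * k + 1) fun a b h => by simp only at h; omega

lemma summable_norm_expCoeff_mul_pow (M τ : ℝ) :
    Summable fun r => ‖expCoeff M r * τ ^ (2 * r)‖ := by
  simp only [expCoeff_mul_pow, norm_div, norm_pow, RCLike.norm_natCast]
  exact summable_pow_div_factorial _

lemma exp_mul_sin_eq_tsum (M c τ : ℝ) :
    exp (-M * τ ^ 2) * sin (c * τ) =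
      ∑' kr : ℕ × ℕ, sinCoeff c kr.1 * expCoeff M kr.2 * τ ^ (2 * (kr.1 + kr.2) + 1) := by
  rw [← (hasSum_sinCoeff_mul_pow c τ).tsum_eq, ← (hasSum_expCoeff_mul_pow M τ).tsum_eq, mul_comm,
    tsum_mul_tsum_of_summable_norm (summable_norm_sinCoeff_mul_pow c τ)
      (summable_norm_expCoeff_mul_pow M τ)]
  exact tsum_congr fun kr => by ring

theorem integral_exp_mul_sin_div_sqrt {p : ℝ} (hp : 0 ≤ p) (M c : ℝ) :
    ∫ τ in Ioc 0 p, exp (-M * τ ^ 2) * sin (c * τ) / √(p ^ 2 - τ ^ 2) =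
      ∑' k, ∑' r, sinCoeff c k * expCoeff M r * oddMoment p (k + r) := by
  have hw : Summable fun kr : ℕ × ℕ =>
      |sinCoeff c kr.1 * expCoeff M kr.2| * p ^ (2 * (kr.1 + kr.2) + 1) := by
    refine ((summable_norm_sinCoeff_mul_pow c p).mul_norm
      (summable_norm_expCoeff_mul_pow M p)).congr fun kr => ?_
    rw [norm_mul, norm_mul, norm_mul, norm_pow, norm_pow, norm_of_nonneg hp, abs_mul,
      Real.norm_eq_abs, Real.norm_eq_abs]
    ring
  have hsum := hasSum_integral_oddMoment hp _ _ hw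
  calc _ = ∑' kr : ℕ × ℕ, sinCoeff c kr.1 * expCoeff M kr.2 * oddMoment p (kr.1 + kr.2) := by
        rw [hsum.tsum_eq]
        congr 1 with τ
        rw [exp_mul_sin_eq_tsum, ← tsum_div_const]
        exact tsum_congr fun kr => mul_div_assoc _ _ _
    _ = _ := hsum.summable.tsum_prod

lemma Gamma_div_Gamma_mul_oneFOne {a b : ℝ} (ha : Gamma a ≠ 0) (hb : Gamma b ≠ 0) (z : ℝ) :
    Gamma a / Gamma b * oneFOne a b z = ∑' r : ℕ, Gamma (a + r) / Gamma (b + r) * z ^ r / r ! := by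
  rw [oneFOne, ← tsum_mul_left]
  refine tsum_congr fun r => ?_
  field_simp

theorem branch_cut_integral_eq_general (p M x ρ : ℝ) (hp : 0 < p)
    (hx : x = 2 * M * p) (hρ : ρ = M * p ^ 2) :
    ∫ τ in (0 : ℝ)..p,
        Real.exp (-M * τ ^ 2) * Real.sin (2 * M * τ) * (p ^ 2 - τ ^ 2) ^ (-(1 : ℝ) / 2) =
      Real.sqrt Real.pi / 2 *
        ∑' k : ℕ, (-1 : ℝ) ^ k * x ^ (2 * k + 1) / (2 * k + 1).factorial *
          ((k.factorial : ℝ) / Real.Gamma ((k : ℝ) + 3 / 2)) *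
          oneFOne ((k : ℝ) + 1) ((k : ℝ) + 3 / 2) (-ρ) := by
  subst hx hρ
  have hkernel : ∀ τ ∈ Ioc 0 p,
      exp (-M * τ ^ 2) * sin (2 * M * τ) * (p ^ 2 - τ ^ 2) ^ (-(1 : ℝ) / 2) =
        exp (-M * τ ^ 2) * sin (2 * M * τ) / √(p ^ 2 - τ ^ 2) := fun τ hτ => by
    rw [neg_div, rpow_neg (sub_nonneg.mpr (pow_le_pow_left₀ hτ.1.le hτ.2 2)), ← sqrt_eq_rpow,
      div_eq_mul_inv]
  rw [intervalIntegral.integral_of_le hp.le, setIntegral_congr_fun measurableSet_Ioc hkernel,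
    integral_exp_mul_sin_div_sqrt hp.le, ← tsum_mul_left]
  refine tsum_congr fun k => ?_
  rw [← Gamma_nat_eq_factorial k, mul_assoc,
    Gamma_div_Gamma_mul_oneFOne (Gamma_pos_of_pos (by positivity)).ne'
      (Gamma_pos_of_pos (by positivity)).ne',
    ← tsum_mul_left, ← tsum_mul_left]
  refine tsum_congr fun r => ?_
  rw [oddMoment_eq hp.le, show (k : ℝ) + 1 + r = ↑(k + r) + 1 by push_cast; ring,
    show (k : ℝ) + 3 / 2 + r = ↑(k + r) + 3 / 2 by push_cast; ring, Gamma_nat_eq_factorial,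
    sinCoeff, expCoeff]
  field_simp
  ring

theorem branch_cut_integral_eq (p M x ρ : ℝ) (hp : 0 < p) (hM : 0 < M)
    (hx : x = 2 * M * p) (hρ : ρ = M * p ^ 2) :
    ∫ τ in (0 : ℝ)..p,
        Real.exp (-M * τ ^ 2) * Real.sin (2 * M * τ) * (p ^ 2 - τ ^ 2) ^ (-(1 : ℝ) / 2) =
      Real.sqrt Real.pi / 2 *
        ∑' k : ℕ, (-1 : ℝ) ^ k * x ^ (2 * k + 1) / (2 * k + 1).factorial *
          ((k.factorial : ℝ) / Real.Gamma ((k : ℝ) + 3 / 2)) *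
          oneFOne ((k : ℝ) + 1) ((k : ℝ) + 3 / 2) (-ρ) :=
  branch_cut_integral_eq_general p M x ρ hp hx hρ
end
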